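/- Let X be a real n×p matrix with rank(X) = p, X† = (XᵀX)⁻¹Xᵀ, and β₀ ∈ ℝᵖ. On a probability space, let S : Ω → ℝ^{r×n} (p ≤ r ≤ n) be a random matrix with rank(S(ω)X) = p almost surely, let Y(ω) be the Moore–Penrose inverse of S(ω)X, set P(ω) = XY(ω)S(ω) and P_X = X(XᵀX)⁻¹Xᵀ, and let ε : Ω → ℝⁿ be independent of S with E[ε_i] = 0 and E[ε_iε_j] = σ²δ_{ij} (σ > 0); assume square-integrability of all relevant entries. Set β̃ = YS(Xβ₀ + ε) and β̂ = X†(Xβ₀ + ε). Then the total mean squared error satisfies MSE(β̃, β₀) := E[‖β̃ − β₀‖₂²] = σ²·trace((XᵀX)⁻¹) + σ²·trace(X†(E[PPᵀ] − P_X)(X†)ᵀ), and consequently MSE(β̃, β₀) ≥ MSE(β̂, β₀) = σ²·trace((XᵀX)⁻¹). -/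

import Mathlib

open Matrix MeasureTheory ProbabilityTheory

/-!
When `SX` has full column rank, the Penrose equations force `Y = ((SX)ᵀSX)⁻¹(SX)ᵀ`, so `B = YS` is a
left inverse of `X` and a measurable function of `S`, hence independent of `ε`. For any such `B`,
`B(Xβ₀ + ε) - β₀ = Bε` and `E‖Bε‖² = σ² E trace(BBᵀ)`. As `YS = X†P`, this trace is
`trace(X† E[PPᵀ] X†ᵀ)`, while for the deterministic `B = X†` it is `trace((XᵀX)⁻¹)`. The inequality
holds pointwise: any left inverse of `X` differs from `X†` by a matrix annihilating the column space
of `X`, which contains the columns of `X†ᵀ`, so `X†` has the least Frobenius norm among them.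
-/

noncomputable def leftPinv {m n : Type*} [Fintype m] [Fintype n] [DecidableEq n]
    (M : Matrix m n ℝ) : Matrix n m ℝ :=
  (Mᵀ * M)⁻¹ * Mᵀ

section LeftPinv

variable {m n : Type*} [Fintype m] [Fintype n]

lemma trace_mul_transpose_self (A : Matrix m n ℝ) :
    (A * Aᵀ).trace = ∑ i, ∑ j, A i j ^ 2 := by
  simp [Matrix.trace, Matrix.mul_apply, sq]

variable [DecidableEq n]

lemma isUnit_of_rank_eq_card {A : Matrix n n ℝ} (h : A.rank = Fintype.card n) : IsUnit A := by
  have hrange : LinearMap.range A.mulVecLin = ⊤ := Submodule.eq_top_of_finrank_eq <| by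
    rw [← Matrix.rank, h, Module.finrank_fintype_fun_eq_card]
  exact Matrix.mulVec_surjective_iff_isUnit.mp (LinearMap.range_eq_top.mp hrange)

lemma isUnit_det_transpose_mul_self {M : Matrix m n ℝ} (h : M.rank = Fintype.card n) :
    IsUnit (Mᵀ * M).det :=
  (Matrix.isUnit_iff_isUnit_det _).mp
    (isUnit_of_rank_eq_card (by rw [Matrix.rank_transpose_mul_self, h]))

lemma leftPinv_mul_self {M : Matrix m n ℝ} (h : M.rank = Fintype.card n) :
    leftPinv M * M = 1 := by
  rw [leftPinv, Matrix.mul_assoc, Matrix.nonsing_inv_mul _ (isUnit_det_transpose_mul_self h)]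

lemma transpose_leftPinv (M : Matrix m n ℝ) : (leftPinv M)ᵀ = M * (Mᵀ * M)⁻¹ := by
  rw [leftPinv, Matrix.transpose_mul, Matrix.transpose_transpose, Matrix.transpose_nonsing_inv,
    Matrix.transpose_mul, Matrix.transpose_transpose]

lemma leftPinv_mul_transpose_leftPinv {M : Matrix m n ℝ} (h : M.rank = Fintype.card n) :
    leftPinv M * (leftPinv M)ᵀ = (Mᵀ * M)⁻¹ := by
  rw [transpose_leftPinv, ← Matrix.mul_assoc, leftPinv_mul_self h, Matrix.one_mul]

lemma eq_leftPinv_of_penrose {M : Matrix m n ℝ} {Y : Matrix n m ℝ} (h1 : M * Y * M = M)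
    (h3 : (M * Y)ᵀ = M * Y) (h : M.rank = Fintype.card n) : Y = leftPinv M := by
  have key : (Mᵀ * M) * Y = Mᵀ := by
    calc (Mᵀ * M) * Y = Mᵀ * (M * Y)ᵀ := by rw [Matrix.mul_assoc, h3]
    _ = Mᵀ := by rw [← Matrix.transpose_mul, h1]
  calc Y = (Mᵀ * M)⁻¹ * ((Mᵀ * M) * Y) := by
        rw [← Matrix.mul_assoc, Matrix.nonsing_inv_mul _ (isUnit_det_transpose_mul_self h),
          Matrix.one_mul]
  _ = leftPinv M := by rw [key, leftPinv]

lemma trace_leftPinv_mul_transpose_le {M : Matrix m n ℝ} (h : M.rank = Fintype.card n)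
    {B : Matrix n m ℝ} (hB : B * M = 1) :
    (leftPinv M * (leftPinv M)ᵀ).trace ≤ (B * Bᵀ).trace := by
  obtain ⟨D, rfl⟩ : ∃ D, B = D + leftPinv M := ⟨B - leftPinv M, (sub_add_cancel _ _).symm⟩
  have hDM : D * M = 0 := by rwa [Matrix.add_mul, leftPinv_mul_self h, add_eq_right] at hB
  have hD : D * (leftPinv M)ᵀ = 0 := by
    rw [transpose_leftPinv, ← Matrix.mul_assoc, hDM, Matrix.zero_mul]
  have hD' : leftPinv M * Dᵀ = 0 := by
    rw [← Matrix.transpose_transpose (leftPinv M), ← Matrix.transpose_mul, hD,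
      Matrix.transpose_zero]
  rw [Matrix.transpose_add, Matrix.add_mul, Matrix.mul_add, Matrix.mul_add, hD, hD', add_zero,
    zero_add, Matrix.trace_add, le_add_iff_nonneg_left, trace_mul_transpose_self]
  positivity

lemma leftPinv_mul_hat {M : Matrix m n ℝ} (h : M.rank = Fintype.card n) :
    leftPinv M * (M * (Mᵀ * M)⁻¹ * Mᵀ) = leftPinv M := by
  rw [Matrix.mul_assoc M, ← leftPinv, ← Matrix.mul_assoc, leftPinv_mul_self h, Matrix.one_mul]

lemma trace_leftPinv_mul_sub_hat_mul_transpose {M : Matrix m n ℝ} (h : M.rank = Fintype.card n)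
    (E : Matrix m m ℝ) :
    (leftPinv M * (E - M * (Mᵀ * M)⁻¹ * Mᵀ) * (leftPinv M)ᵀ).trace =
      (leftPinv M * E * (leftPinv M)ᵀ).trace - ((Mᵀ * M)⁻¹).trace := by
  rw [Matrix.mul_sub, Matrix.sub_mul, Matrix.trace_sub, leftPinv_mul_hat h,
    leftPinv_mul_transpose_leftPinv h]

end LeftPinv

lemma mul_mul_transpose_mul_transpose_of_mul_eq_one {k m n : Type*} [Fintype k] [Fintype m]
    [Fintype n] [DecidableEq k] {L : Matrix k n ℝ} {X : Matrix n k ℝ} (hL : L * X = 1)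
    (B : Matrix k m ℝ) :
    L * (X * B * (X * B)ᵀ) * Lᵀ = B * Bᵀ := by
  have hregroup : L * (X * B * (X * B)ᵀ) * Lᵀ = L * X * B * (L * X * B)ᵀ := by
    simp only [Matrix.transpose_mul, Matrix.mul_assoc]
  rw [hregroup, hL, Matrix.one_mul]

lemma measurable_leftPinv_mul {m n k : Type*} [Fintype m] [Fintype n] [Fintype k]
    [DecidableEq k] (X : Matrix n k ℝ) :
    Measurable fun M : m → n → ℝ => fun i j => (leftPinv (of M * X) * of M) i j := by
  -- Cramer's rule `A⁻¹ = A.det⁻¹ • A.adjugate` reduces this to continuity of `det` and `adjugate`.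
  have hG : Continuous fun M : m → n → ℝ => (of M * X)ᵀ * (of M * X) := by fun_prop
  refine measurable_pi_lambda _ fun i => measurable_pi_lambda _ fun j => ?_
  simp only [leftPinv, Matrix.inv_def, Ring.inverse_eq_inv, Matrix.smul_mul, Matrix.smul_apply,
    smul_eq_mul]
  refine (hG.matrix_det.measurable.inv).mul (Continuous.measurable ?_)
  fun_prop

section Moments

variable {Ω : Type*} [MeasurableSpace Ω] {μ : Measure Ω} {m n : Type*} [Fintype m] [Fintype n]

lemma sum_sq_mulVec (A : Matrix m n ℝ) (v : n → ℝ) :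
    ∑ i, (A *ᵥ v) i ^ 2 = ∑ i, ∑ j, ∑ k, A i j * A i k * (v j * v k) := by
  refine Finset.sum_congr rfl fun i _ => ?_
  rw [sq, Matrix.mulVec, dotProduct, Finset.sum_mul_sum]
  exact Finset.sum_congr rfl fun j _ => Finset.sum_congr rfl fun k _ => by ring

lemma sum_sq_mulVec_add_sub {k : Type*} [Fintype k] [DecidableEq k] {B : Matrix k n ℝ}
    {X : Matrix n k ℝ} (hBX : B * X = 1) (β : k → ℝ) (e : n → ℝ) :
    ∑ i, ((B *ᵥ (X *ᵥ β + e)) i - β i) ^ 2 = ∑ i, (B *ᵥ e) i ^ 2 := by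
  simp [Matrix.mulVec_add, Matrix.mulVec_mulVec, hBX]

lemma integrable_trace_mul_transpose_self {A : Ω → Matrix m n ℝ}
    (hA : ∀ i j, MemLp (fun ω => A ω i j) 2 μ) :
    Integrable (fun ω => (A ω * (A ω)ᵀ).trace) μ := by
  simp_rw [trace_mul_transpose_self]
  exact integrable_finsetSum _ fun i _ =>
    integrable_finsetSum _ fun j _ => (hA i j).integrable_sq

lemma trace_leftPinv_mul_transpose_le_integral [IsProbabilityMeasure μ] [DecidableEq n]
    {X : Matrix m n ℝ} (h : X.rank = Fintype.card n) {B : Ω → Matrix n m ℝ}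
    (hBX : ∀ᵐ ω ∂μ, B ω * X = 1) (hB : ∀ i j, MemLp (fun ω => B ω i j) 2 μ) :
    (leftPinv X * (leftPinv X)ᵀ).trace ≤ ∫ ω, (B ω * (B ω)ᵀ).trace ∂μ := by
  calc (leftPinv X * (leftPinv X)ᵀ).trace = ∫ _, (leftPinv X * (leftPinv X)ᵀ).trace ∂μ := by
        simp
    _ ≤ ∫ ω, (B ω * (B ω)ᵀ).trace ∂μ :=
      integral_mono_ae (integrable_const _) (integrable_trace_mul_transpose_self hB)
        (hBX.mono fun ω hω => trace_leftPinv_mul_transpose_le h hω)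

lemma integral_trace_mul_mul {M : Ω → Matrix n n ℝ}
    (hM : ∀ i j, Integrable (fun ω => M ω i j) μ) {E : Matrix n n ℝ}
    (hE : ∀ i j, E i j = ∫ ω, M ω i j ∂μ) (B : Matrix m n ℝ) (C : Matrix n m ℝ) :
    ∫ ω, (B * M ω * C).trace ∂μ = (B * E * C).trace := by
  have hexpand : ∀ N : Matrix n n ℝ, (B * N * C).trace = ∑ i, ∑ j, (C * B) j i * N i j := by
    intro N
    rw [Matrix.trace_mul_cycle, Matrix.trace, Finset.sum_comm]
    simp [Matrix.mul_apply, mul_comm]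
  simp_rw [hexpand, hE]
  rw [integral_finsetSum _ fun i _ => integrable_finsetSum _ fun j _ => (hM i j).const_mul _]
  refine Finset.sum_congr rfl fun i _ => ?_
  rw [integral_finsetSum _ fun j _ => (hM i j).const_mul _]
  simp_rw [integral_const_mul]

variable [DecidableEq n]

lemma integral_sum_sq_mulVec_of_indepFun {A : Ω → Matrix m n ℝ} {ε : Ω → n → ℝ} {σ : ℝ}
    (hind : IndepFun (fun ω i j => A ω i j) ε μ) (hA : ∀ i j, MemLp (fun ω => A ω i j) 2 μ)
    (hε : ∀ i, MemLp (fun ω => ε ω i) 2 μ)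
    (hcov : ∀ i j, ∫ ω, ε ω i * ε ω j ∂μ = if i = j then σ ^ 2 else 0) :
    ∫ ω, ∑ i, (A ω *ᵥ ε ω) i ^ 2 ∂μ = σ ^ 2 * ∫ ω, (A ω * (A ω)ᵀ).trace ∂μ := by
  have hAA : ∀ i j k, Integrable (fun ω => A ω i j * A ω i k) μ :=
    fun i j k => (hA i j).integrable_mul (hA i k)
  have hεε : ∀ j k, Integrable (fun ω => ε ω j * ε ω k) μ :=
    fun j k => (hε j).integrable_mul (hε k)
  have hind' : ∀ i j k, IndepFun (fun ω => A ω i j * A ω i k) (fun ω => ε ω j * ε ω k) μ :=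
    fun i j k => hind.comp (φ := fun M : m → n → ℝ => M i j * M i k)
      (ψ := fun v : n → ℝ => v j * v k) (by fun_prop) (by fun_prop)
  have hint : ∀ i j k, Integrable (fun ω => A ω i j * A ω i k * (ε ω j * ε ω k)) μ :=
    fun i j k => (hind' i j k).integrable_mul (hAA i j k) (hεε j k)
  simp_rw [sum_sq_mulVec, trace_mul_transpose_self]
  rw [integral_finsetSum _ fun i _ => integrable_finsetSum _ fun j _ =>
      integrable_finsetSum _ fun k _ => hint i j k,
    integral_finsetSum _ fun i _ => integrable_finsetSum _ fun j _ => (hA i j).integrable_sq,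
    Finset.mul_sum]
  refine Finset.sum_congr rfl fun i _ => ?_
  rw [integral_finsetSum _ fun j _ => integrable_finsetSum _ fun k _ => hint i j k,
    integral_finsetSum _ fun j _ => (hA i j).integrable_sq, Finset.mul_sum]
  refine Finset.sum_congr rfl fun j _ => ?_
  rw [integral_finsetSum _ fun k _ => hint i j k]
  simp_rw [(hind' i j _).integral_fun_mul_eq_mul_integral (hAA i j _).aestronglyMeasurable
    (hεε j _).aestronglyMeasurable, hcov, mul_ite, mul_zero, Finset.sum_ite_eq, Finset.mem_univ,
    if_true, sq, mul_comm]

lemma integral_sum_sq_mulVec_add_sub_of_indepFun {k : Type*} [Fintype k] [DecidableEq k]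
    (X : Matrix n k ℝ) (β : k → ℝ) {B : Ω → Matrix k n ℝ} {ε : Ω → n → ℝ} {σ : ℝ}
    (hBX : ∀ᵐ ω ∂μ, B ω * X = 1)
    (hind : IndepFun (fun ω i j => B ω i j) ε μ) (hB : ∀ i j, MemLp (fun ω => B ω i j) 2 μ)
    (hε : ∀ i, MemLp (fun ω => ε ω i) 2 μ)
    (hcov : ∀ i j, ∫ ω, ε ω i * ε ω j ∂μ = if i = j then σ ^ 2 else 0) :
    ∫ ω, ∑ i, ((B ω *ᵥ (X *ᵥ β + ε ω)) i - β i) ^ 2 ∂μ =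
      σ ^ 2 * ∫ ω, (B ω * (B ω)ᵀ).trace ∂μ := by
  rw [← integral_sum_sq_mulVec_of_indepFun hind hB hε hcov]
  exact integral_congr_ae (hBX.mono fun ω h => sum_sq_mulVec_add_sub h β (ε ω))

lemma integral_sum_sq_leftPinv_mulVec_add_sub [IsProbabilityMeasure μ] {k : Type*} [Fintype k]
    [DecidableEq k] {X : Matrix n k ℝ} (h : X.rank = Fintype.card k) (β : k → ℝ)
    {ε : Ω → n → ℝ} {σ : ℝ} (hε : ∀ i, MemLp (fun ω => ε ω i) 2 μ)
    (hcov : ∀ i j, ∫ ω, ε ω i * ε ω j ∂μ = if i = j then σ ^ 2 else 0) :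
    ∫ ω, ∑ i, ((leftPinv X *ᵥ (X *ᵥ β + ε ω)) i - β i) ^ 2 ∂μ = σ ^ 2 * ((Xᵀ * X)⁻¹).trace := by
  rw [integral_sum_sq_mulVec_add_sub_of_indepFun X β (B := fun _ => leftPinv X)
    (ae_of_all _ fun _ => leftPinv_mul_self h) (indepFun_const_left _ _)
    (fun _ _ => memLp_const _) hε hcov, integral_const, probReal_univ, one_smul,
    leftPinv_mul_transpose_leftPinv h]

end Moments

theorem total_mse_rank_preserved_general
    {n p r : ℕ} (X : Matrix (Fin n) (Fin p) ℝ) (hX : X.rank = p)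
    (Xd : Matrix (Fin p) (Fin n) ℝ) (hXd : Xd = (Xᵀ * X)⁻¹ * Xᵀ)
    (PX : Matrix (Fin n) (Fin n) ℝ) (hPX : PX = X * (Xᵀ * X)⁻¹ * Xᵀ)
    {Ω : Type*} [MeasurableSpace Ω] (μ : Measure Ω) [IsProbabilityMeasure μ]
    (S : Ω → Matrix (Fin r) (Fin n) ℝ)
    (Y : Ω → Matrix (Fin p) (Fin r) ℝ)
    (hp1 : ∀ ω, (S ω * X) * Y ω * (S ω * X) = S ω * X)
    (hp3 : ∀ ω, ((S ω * X) * Y ω)ᵀ = (S ω * X) * Y ω)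
    (hrank : ∀ᵐ ω ∂μ, (S ω * X).rank = p)
    (P : Ω → Matrix (Fin n) (Fin n) ℝ) (hP : ∀ ω, P ω = X * Y ω * S ω)
    (β₀ : Fin p → ℝ) (σ : ℝ) (ε : Ω → Fin n → ℝ)
    (hindep : ProbabilityTheory.IndepFun ε
      ((fun ω i j => S ω i j) : Ω → Fin r → Fin n → ℝ) μ)
    (hεL2 : ∀ i, MemLp (fun ω => ε ω i) 2 μ)
    (hεcov : ∀ i j, ∫ ω, ε ω i * ε ω j ∂μ = if i = j then σ ^ 2 else 0)
    (hYSL2 : ∀ i j, MemLp (fun ω => (Y ω * S ω) i j) 2 μ)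
    (hPPTint : ∀ i j, Integrable (fun ω => (P ω * (P ω)ᵀ) i j) μ)
    (EPPT : Matrix (Fin n) (Fin n) ℝ)
    (hEPPT : ∀ i j, EPPT i j = ∫ ω, (P ω * (P ω)ᵀ) i j ∂μ)
    (βtilde : Ω → Fin p → ℝ)
    (hβtilde : ∀ ω, βtilde ω = Y ω *ᵥ (S ω *ᵥ (X *ᵥ β₀ + ε ω)))
    (βhat : Ω → Fin p → ℝ)
    (hβhat : ∀ ω, βhat ω = Xd *ᵥ (X *ᵥ β₀ + ε ω)) :
    (∫ ω, ∑ i, (βtilde ω i - β₀ i) ^ 2 ∂μ) =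
      σ ^ 2 * ((Xᵀ * X)⁻¹ : Matrix (Fin p) (Fin p) ℝ).trace +
        σ ^ 2 * (Xd * (EPPT - PX) * Xdᵀ).trace ∧
    (∫ ω, ∑ i, (βhat ω i - β₀ i) ^ 2 ∂μ) =
      σ ^ 2 * ((Xᵀ * X)⁻¹ : Matrix (Fin p) (Fin p) ℝ).trace ∧
    (∫ ω, ∑ i, (βhat ω i - β₀ i) ^ 2 ∂μ) ≤
      ∫ ω, ∑ i, (βtilde ω i - β₀ i) ^ 2 ∂μ := by
  have hXrank : X.rank = Fintype.card (Fin p) := by rw [hX, Fintype.card_fin]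
  obtain rfl : Xd = leftPinv X := hXd
  subst hPX
  set A : Ω → Matrix (Fin p) (Fin n) ℝ := fun ω => leftPinv (S ω * X) * S ω
  have hYS : ∀ᵐ ω ∂μ, Y ω * S ω = A ω := hrank.mono fun ω h => by
    rw [eq_leftPinv_of_penrose (hp1 ω) (hp3 ω) (by rw [h, Fintype.card_fin])]
  have hAX : ∀ᵐ ω ∂μ, A ω * X = 1 := hrank.mono fun ω h => by
    rw [Matrix.mul_assoc, leftPinv_mul_self (by rw [h, Fintype.card_fin])]
  have hAL2 : ∀ i j, MemLp (fun ω => A ω i j) 2 μ := fun i j =>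
    (hYSL2 i j).ae_eq (hYS.mono fun ω h => by rw [h])
  have hmse_tilde : ∫ ω, ∑ i, (βtilde ω i - β₀ i) ^ 2 ∂μ =
      σ ^ 2 * ∫ ω, (A ω * (A ω)ᵀ).trace ∂μ := by
    rw [← integral_sum_sq_mulVec_add_sub_of_indepFun X β₀ hAX
      (hindep.symm.comp (measurable_leftPinv_mul X) measurable_id) hAL2 hεL2 hεcov]
    refine integral_congr_ae (hYS.mono fun ω h => ?_)
    simp only [hβtilde, Matrix.mulVec_mulVec, h, Function.id_comp]
  have hmse_hat : ∫ ω, ∑ i, (βhat ω i - β₀ i) ^ 2 ∂μ =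
      σ ^ 2 * ((Xᵀ * X)⁻¹ : Matrix (Fin p) (Fin p) ℝ).trace := by
    simp_rw [hβhat]
    exact integral_sum_sq_leftPinv_mulVec_add_sub hXrank β₀ hεL2 hεcov
  have htrace :
      ∫ ω, (A ω * (A ω)ᵀ).trace ∂μ = (leftPinv X * EPPT * (leftPinv X)ᵀ).trace := by
    rw [← integral_trace_mul_mul hPPTint hEPPT]
    refine integral_congr_ae (hYS.mono fun ω h => ?_)
    dsimp only
    rw [hP, Matrix.mul_assoc X, h,
      mul_mul_transpose_mul_transpose_of_mul_eq_one (leftPinv_mul_self hXrank)]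
  refine ⟨?_, hmse_hat, ?_⟩
  · rw [hmse_tilde, htrace, trace_leftPinv_mul_sub_hat_mul_transpose hXrank]
    ring
  · rw [hmse_hat, hmse_tilde, ← leftPinv_mul_transpose_leftPinv hXrank]
    exact mul_le_mul_of_nonneg_left
      (trace_leftPinv_mul_transpose_le_integral hXrank hAX hAL2) (sq_nonneg σ)

/-- total MSE conditioned on rank preservation:
if `rank(S(ω)X) = p` almost surely and `ε` (mean zero, covariance `σ²I`) is
independent of `S`, then
`MSE(β̃, β₀) = E‖β̃ - β₀‖₂² = σ² trace((XᵀX)⁻¹) + σ² trace(X†(E[PPᵀ] - P_X)(X†)ᵀ)`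
and consequently `MSE(β̃, β₀) ≥ MSE(β̂, β₀) = σ² trace((XᵀX)⁻¹)`. -/
theorem total_mse_rank_preserved
    {n p r : ℕ} (X : Matrix (Fin n) (Fin p) ℝ) (hX : X.rank = p)
    (hpr : p ≤ r) (hrn : r ≤ n)
    (Xd : Matrix (Fin p) (Fin n) ℝ) (hXd : Xd = (Xᵀ * X)⁻¹ * Xᵀ)
    (PX : Matrix (Fin n) (Fin n) ℝ) (hPX : PX = X * (Xᵀ * X)⁻¹ * Xᵀ)
    {Ω : Type*} [MeasurableSpace Ω] (μ : Measure Ω) [IsProbabilityMeasure μ]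
    (S : Ω → Matrix (Fin r) (Fin n) ℝ)
    (Y : Ω → Matrix (Fin p) (Fin r) ℝ)
    (hp1 : ∀ ω, (S ω * X) * Y ω * (S ω * X) = S ω * X)
    (hp2 : ∀ ω, Y ω * ((S ω * X) * Y ω) = Y ω)
    (hp3 : ∀ ω, ((S ω * X) * Y ω)ᵀ = (S ω * X) * Y ω)
    (hp4 : ∀ ω, (Y ω * (S ω * X))ᵀ = Y ω * (S ω * X))
    (hrank : ∀ᵐ ω ∂μ, (S ω * X).rank = p)
    (P : Ω → Matrix (Fin n) (Fin n) ℝ) (hP : ∀ ω, P ω = X * Y ω * S ω)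
    (β₀ : Fin p → ℝ) (σ : ℝ) (hσ : 0 < σ) (ε : Ω → Fin n → ℝ)
    (hindep : ProbabilityTheory.IndepFun ε
      ((fun ω i j => S ω i j) : Ω → Fin r → Fin n → ℝ) μ)
    (hεL2 : ∀ i, MemLp (fun ω => ε ω i) 2 μ)
    (hεmean : ∀ i, ∫ ω, ε ω i ∂μ = 0)
    (hεcov : ∀ i j, ∫ ω, ε ω i * ε ω j ∂μ = if i = j then σ ^ 2 else 0)
    (hYSL2 : ∀ i j, MemLp (fun ω => (Y ω * S ω) i j) 2 μ)
    (hPPTint : ∀ i j, Integrable (fun ω => (P ω * (P ω)ᵀ) i j) μ)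
    (EPPT : Matrix (Fin n) (Fin n) ℝ)
    (hEPPT : ∀ i j, EPPT i j = ∫ ω, (P ω * (P ω)ᵀ) i j ∂μ)
    (βtilde : Ω → Fin p → ℝ)
    (hβtilde : ∀ ω, βtilde ω = Y ω *ᵥ (S ω *ᵥ (X *ᵥ β₀ + ε ω)))
    (hMSEint : Integrable (fun ω => ∑ i, (βtilde ω i - β₀ i) ^ 2) μ)
    (βhat : Ω → Fin p → ℝ)
    (hβhat : ∀ ω, βhat ω = Xd *ᵥ (X *ᵥ β₀ + ε ω)) :
    (∫ ω, ∑ i, (βtilde ω i - β₀ i) ^ 2 ∂μ) =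
      σ ^ 2 * ((Xᵀ * X)⁻¹ : Matrix (Fin p) (Fin p) ℝ).trace +
        σ ^ 2 * (Xd * (EPPT - PX) * Xdᵀ).trace ∧
    (∫ ω, ∑ i, (βhat ω i - β₀ i) ^ 2 ∂μ) =
      σ ^ 2 * ((Xᵀ * X)⁻¹ : Matrix (Fin p) (Fin p) ℝ).trace ∧
    (∫ ω, ∑ i, (βhat ω i - β₀ i) ^ 2 ∂μ) ≤
      ∫ ω, ∑ i, (βtilde ω i - β₀ i) ^ 2 ∂μ :=
  total_mse_rank_preserved_general X hX Xd hXd PX hPX μ S Y hp1 hp3 hrank P hP β₀ σ ε hindep hεL2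
    hεcov hYSL2 hPPTint EPPT hEPPT βtilde hβtilde βhat hβhat
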